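/- Assume ρ(A_B) is nonempty. Then: (i) for every λ ∈ ρ(A_B) and every f in the range of Γ₁ − BΓ₂ there exists exactly one u ∈ D(T) with Tu = λu and Γ₁u − BΓ₂u = f (so the solution operator S_{λ,B}f := u is well defined); (ii) ρ(A_B) is an open subset of ℂ and, for each fixed f ∈ Ran(Γ₁ − BΓ₂), the map λ ↦ S_{λ,B}f from ρ(A_B) to H is analytic, i.e. complex differentiable at every point of ρ(A_B). -/
import Mathlib


open scoped InnerProductSpace

variable {H 𝓗 𝓚 : Type*}
  [NormedAddCommGroup H] [InnerProductSpace ℂ H] [CompleteSpace H]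
  [NormedAddCommGroup 𝓗] [InnerProductSpace ℂ 𝓗] [CompleteSpace 𝓗]
  [NormedAddCommGroup 𝓚] [InnerProductSpace ℂ 𝓚] [CompleteSpace 𝓚]

/-- `R` is the (bounded, everywhere defined) inverse of `A_B − λ`, where `A_B` is the
restriction of `T` to `{u ∈ D(T) : Γ₁ u = B (Γ₂ u)}`. -/
def IsResolventAt (dom : Submodule ℂ H) (T : dom →ₗ[ℂ] H)
    (Γ₁ : dom →ₗ[ℂ] 𝓗) (Γ₂ : dom →ₗ[ℂ] 𝓚) (B : 𝓚 →L[ℂ] 𝓗)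
    (lam : ℂ) (R : H →L[ℂ] H) : Prop :=
  (∀ h : H, ∃ hm : R h ∈ dom,
      Γ₁ ⟨R h, hm⟩ = B (Γ₂ ⟨R h, hm⟩) ∧ T ⟨R h, hm⟩ - lam • R h = h) ∧
  (∀ u : dom, Γ₁ u = B (Γ₂ u) → R (T u - lam • (u : H)) = (u : H))

/-- The resolvent set `ρ(A_B)`. -/
def resolventSetB (dom : Submodule ℂ H) (T : dom →ₗ[ℂ] H)
    (Γ₁ : dom →ₗ[ℂ] 𝓗) (Γ₂ : dom →ₗ[ℂ] 𝓚) (B : 𝓚 →L[ℂ] 𝓗) : Set ℂ :=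
  {lam | ∃ R : H →L[ℂ] H, IsResolventAt dom T Γ₁ Γ₂ B lam R}

/-- The resolvent at a point is unique. -/
lemma isResolventAt_unique {dom : Submodule ℂ H} {T : dom →ₗ[ℂ] H}
    {Γ₁ : dom →ₗ[ℂ] 𝓗} {Γ₂ : dom →ₗ[ℂ] 𝓚} {B : 𝓚 →L[ℂ] 𝓗}
    {lam : ℂ} {R R' : H →L[ℂ] H}
    (h1 : IsResolventAt dom T Γ₁ Γ₂ B lam R)
    (h2 : IsResolventAt dom T Γ₁ Γ₂ B lam R') : R = R' := by
  ext h
  obtain ⟨hm, hΓ, hT⟩ := h1.1 h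
  have := h2.2 ⟨R h, hm⟩ hΓ
  simp only at this
  rw [hT] at this
  exact this.symm

/-- Neumann-series perturbation of the resolvent. -/
lemma isResolventAt_perturb {dom : Submodule ℂ H} {T : dom →ₗ[ℂ] H}
    {Γ₁ : dom →ₗ[ℂ] 𝓗} {Γ₂ : dom →ₗ[ℂ] 𝓚} {B : 𝓚 →L[ℂ] 𝓗}
    {lam₀ : ℂ} {R₀ : H →L[ℂ] H}
    (h0 : IsResolventAt dom T Γ₁ Γ₂ B lam₀ R₀) (lam : ℂ)
    (hμ : ‖(lam - lam₀) • R₀‖ < 1) :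
    IsResolventAt dom T Γ₁ Γ₂ B lam
      (R₀ * ((Units.oneSub ((lam - lam₀) • R₀) hμ)⁻¹ : (H →L[ℂ] H)ˣ)) := by
  set t : H →L[ℂ] H := (lam - lam₀) • R₀ with ht
  set U : (H →L[ℂ] H)ˣ := Units.oneSub t hμ with hU
  constructor
  · intro h
    show ∃ hm : R₀ (((U⁻¹ : (H →L[ℂ] H)ˣ) : H →L[ℂ] H) h) ∈ dom, _
    set g : H := ((U⁻¹ : (H →L[ℂ] H)ˣ) : H →L[ℂ] H) h with hg
    obtain ⟨hm, hΓ, hT⟩ := h0.1 g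
    refine ⟨hm, hΓ, ?_⟩
    have key : g - (lam - lam₀) • R₀ g = h := by
      have h1 : (U : H →L[ℂ] H) g = h := by
        rw [hg, ← ContinuousLinearMap.mul_apply, U.mul_inv,
          ContinuousLinearMap.one_apply]
      have h2 : (U : H →L[ℂ] H) g = g - (lam - lam₀) • R₀ g := by
        simp [hU, Units.oneSub, ht, ContinuousLinearMap.sub_apply]
      rw [← h2]
      exact h1
    have expand : T ⟨R₀ g, hm⟩ - lam • R₀ g
        = (T ⟨R₀ g, hm⟩ - lam₀ • R₀ g) - (lam - lam₀) • R₀ g := by module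
    show T ⟨R₀ g, hm⟩ - lam • R₀ g = h
    rw [expand, hT, key]
  · intro u hu
    have hR0 := h0.2 u hu
    set h₀ : H := T u - lam₀ • (u : H) with hh₀
    have h1 : T u - lam • (u : H) = (U : H →L[ℂ] H) h₀ := by
      have h2 : (U : H →L[ℂ] H) h₀ = h₀ - (lam - lam₀) • R₀ h₀ := by
        simp [hU, Units.oneSub, ht, ContinuousLinearMap.sub_apply]
      rw [h2, hR0, hh₀]
      module
    show R₀ (((U⁻¹ : (H →L[ℂ] H)ˣ) : H →L[ℂ] H) (T u - lam • (u : H))) = (u : H)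
    rw [h1]
    have h3 : ((U⁻¹ : (H →L[ℂ] H)ˣ) : H →L[ℂ] H) ((U : H →L[ℂ] H) h₀) = h₀ := by
      rw [← ContinuousLinearMap.mul_apply, U.inv_mul, ContinuousLinearMap.one_apply]
    rw [h3, hR0]

lemma norm_sub_smul_lt_one {R₀ : H →L[ℂ] H} {lam lam₀ : ℂ}
    (hball : ‖lam - lam₀‖ < (‖R₀‖ + 1)⁻¹) : ‖(lam - lam₀) • R₀‖ < 1 := by
  have hpos : (0:ℝ) < ‖R₀‖ + 1 := by positivity
  calc ‖(lam - lam₀) • R₀‖ = ‖lam - lam₀‖ * ‖R₀‖ := norm_smul _ _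
    _ ≤ ‖lam - lam₀‖ * (‖R₀‖ + 1) :=
        mul_le_mul_of_nonneg_left (by linarith) (norm_nonneg _)
    _ < (‖R₀‖ + 1)⁻¹ * (‖R₀‖ + 1) := mul_lt_mul_of_pos_right hball hpos
    _ = 1 := inv_mul_cancel₀ (ne_of_gt hpos)

theorem stmt0 (dom : Submodule ℂ H) (T : dom →ₗ[ℂ] H)
    (Γ₁ : dom →ₗ[ℂ] 𝓗) (Γ₂ : dom →ₗ[ℂ] 𝓚) (B : 𝓚 →L[ℂ] 𝓗)
    (hne : (resolventSetB dom T Γ₁ Γ₂ B).Nonempty) :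
    -- (i) existence and uniqueness of the solution `u = S_{λ,B} f`
    (∀ lam ∈ resolventSetB dom T Γ₁ Γ₂ B,
      ∀ f ∈ Set.range (fun u : dom => Γ₁ u - B (Γ₂ u)),
        ∃! u : dom, T u = lam • (u : H) ∧ Γ₁ u - B (Γ₂ u) = f) ∧
    -- (ii) openness of the resolvent set and analyticity of `λ ↦ S_{λ,B} f`
    IsOpen (resolventSetB dom T Γ₁ Γ₂ B) ∧
    (∀ f ∈ Set.range (fun u : dom => Γ₁ u - B (Γ₂ u)),
      ∃ s : ℂ → H,
        (∀ lam ∈ resolventSetB dom T Γ₁ Γ₂ B,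
          ∃ hm : s lam ∈ dom,
            T ⟨s lam, hm⟩ = lam • s lam ∧
              Γ₁ ⟨s lam, hm⟩ - B (Γ₂ ⟨s lam, hm⟩) = f) ∧
        (∀ lam ∈ resolventSetB dom T Γ₁ Γ₂ B, DifferentiableAt ℂ s lam)) := by
  refine ⟨?_, ?_, ?_⟩
  · -- (i)
    rintro lam ⟨R, hR⟩ f ⟨v, rfl⟩
    simp only
    set h₀ : H := T v - lam • (v : H) with hh₀
    obtain ⟨hm0, hΓ0, hT0⟩ := hR.1 h₀
    set u : dom := v - ⟨R h₀, hm0⟩ with hu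
    have hTu : T u = lam • (u : H) := by
      have h2 : T ⟨R h₀, hm0⟩ = h₀ + lam • R h₀ := sub_eq_iff_eq_add.mp hT0
      have h3 : ((u : H)) = (v : H) - R h₀ := rfl
      rw [hu, map_sub, h2, ← hu, h3, hh₀]
      module
    have hΓu : Γ₁ u - B (Γ₂ u) = Γ₁ v - B (Γ₂ v) := by
      rw [hu]; simp only [map_sub, hΓ0]; abel
    refine ⟨u, ⟨hTu, hΓu⟩, ?_⟩
    rintro w ⟨hw1, hw2⟩
    have key : Γ₁ w - B (Γ₂ w) = Γ₁ u - B (Γ₂ u) := hw2.trans hΓu.symm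
    have hdiff : Γ₁ (w - u) = B (Γ₂ (w - u)) := by
      have e1 : Γ₁ (w - u) = Γ₁ w - Γ₁ u := map_sub _ _ _
      have e2 : Γ₂ (w - u) = Γ₂ w - Γ₂ u := map_sub _ _ _
      have e3 : B (Γ₂ w - Γ₂ u) = B (Γ₂ w) - B (Γ₂ u) := map_sub _ _ _
      rw [e1, e2, e3]
      exact sub_eq_sub_iff_sub_eq_sub.mp key
    have hz : T (w - u) - lam • ((w - u : dom) : H) = 0 := by
      rw [map_sub, hw1, hTu]
      simp only [Submodule.coe_sub, smul_sub]
      abel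
    have h4 := hR.2 (w - u) hdiff
    rw [hz, map_zero] at h4
    have h5 : w - u = 0 := Subtype.ext (by simpa using h4.symm)
    exact sub_eq_zero.mp h5
  · -- (ii) openness
    rw [Metric.isOpen_iff]
    rintro lam₀ ⟨R₀, hR₀⟩
    refine ⟨(‖R₀‖ + 1)⁻¹, by positivity, ?_⟩
    intro lam hlam
    rw [Metric.mem_ball, dist_eq_norm] at hlam
    exact ⟨_, isResolventAt_perturb hR₀ lam (norm_sub_smul_lt_one hlam)⟩
  · -- (iii)
    rintro f ⟨v, rfl⟩
    classical
    set ρ := resolventSetB dom T Γ₁ Γ₂ B with hρ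
    refine ⟨fun lam => if h : lam ∈ ρ then
        (v : H) - h.choose (T v - lam • (v : H)) else 0, ?_, ?_⟩
    · intro lam hlam
      have hR : IsResolventAt dom T Γ₁ Γ₂ B lam hlam.choose := hlam.choose_spec
      obtain ⟨hm0, hΓ0, hT0⟩ := hR.1 (T v - lam • (v : H))
      have hs : (fun lam => if h : lam ∈ ρ then
          (v : H) - h.choose (T v - lam • (v : H)) else 0) lam
          = (v : H) - hlam.choose (T v - lam • (v : H)) := by
        simp only [dif_pos hlam]
      rw [hs]
      have hm : (v : H) - hlam.choose (T v - lam • (v : H)) ∈ dom := sub_mem v.2 hm0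
      refine ⟨hm, ?_, ?_⟩
      · have heq : (⟨(v : H) - hlam.choose (T v - lam • (v : H)), hm⟩ : dom)
            = v - ⟨hlam.choose (T v - lam • (v : H)), hm0⟩ := rfl
        rw [heq, map_sub]
        have h2 : T ⟨hlam.choose (T v - lam • (v : H)), hm0⟩
            = (T v - lam • (v : H)) + lam • hlam.choose (T v - lam • (v : H)) :=
          sub_eq_iff_eq_add.mp hT0
        rw [h2]
        module
      · have heq : (⟨(v : H) - hlam.choose (T v - lam • (v : H)), hm⟩ : dom)
            = v - ⟨hlam.choose (T v - lam • (v : H)), hm0⟩ := rfl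
        rw [heq]
        have e1 : Γ₁ (v - ⟨hlam.choose (T v - lam • (v : H)), hm0⟩)
            = Γ₁ v - Γ₁ ⟨hlam.choose (T v - lam • (v : H)), hm0⟩ := map_sub _ _ _
        have e2 : Γ₂ (v - ⟨hlam.choose (T v - lam • (v : H)), hm0⟩)
            = Γ₂ v - Γ₂ ⟨hlam.choose (T v - lam • (v : H)), hm0⟩ := map_sub _ _ _
        have e3 : B (Γ₂ v - Γ₂ ⟨hlam.choose (T v - lam • (v : H)), hm0⟩)
            = B (Γ₂ v) - B (Γ₂ ⟨hlam.choose (T v - lam • (v : H)), hm0⟩) := map_sub _ _ _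
        rw [e1, e2, e3, hΓ0]
        show _ = Γ₁ v - B (Γ₂ v)
        abel
    · intro lam₀ hlam₀
      set R₀ : H →L[ℂ] H := hlam₀.choose with hR₀def
      have hR₀ : IsResolventAt dom T Γ₁ Γ₂ B lam₀ R₀ := hlam₀.choose_spec
      have hgd : DifferentiableAt ℂ (fun lam : ℂ => (v : H) -
          R₀ (Ring.inverse ((1 : H →L[ℂ] H) - (lam - lam₀) • R₀)
            (T v - lam • (v : H)))) lam₀ := by
        have hc : DifferentiableAt ℂ
            (fun lam : ℂ => (1 : H →L[ℂ] H) - (lam - lam₀) • R₀) lam₀ :=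
          (differentiableAt_const _).sub
            ((differentiableAt_id.sub_const lam₀).smul_const R₀)
        have hunit : IsUnit ((1 : H →L[ℂ] H) - (lam₀ - lam₀) • R₀) := by simp
        have hinv : DifferentiableAt ℂ
            (fun lam : ℂ => Ring.inverse ((1 : H →L[ℂ] H) - (lam - lam₀) • R₀)) lam₀ :=
          hc.inverse hunit
        have hw : DifferentiableAt ℂ (fun lam : ℂ => T v - lam • (v : H)) lam₀ :=
          (differentiableAt_const _).sub (differentiableAt_id.smul_const ((v : H)))
        have happ := hinv.clm_apply hw
        exact (differentiableAt_const ((v : H))).sub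
          ((R₀.differentiableAt).comp lam₀ happ)
      refine hgd.congr_of_eventuallyEq ?_
      have hball : Metric.ball lam₀ ((‖R₀‖ + 1)⁻¹) ∈ nhds lam₀ :=
        Metric.ball_mem_nhds _ (by positivity)
      refine Filter.eventuallyEq_of_mem hball ?_
      intro lam hlam
      rw [Metric.mem_ball, dist_eq_norm] at hlam
      have hμ : ‖(lam - lam₀) • R₀‖ < 1 := norm_sub_smul_lt_one hlam
      set U : (H →L[ℂ] H)ˣ := Units.oneSub ((lam - lam₀) • R₀) hμ with hU
      have hres : IsResolventAt dom T Γ₁ Γ₂ B lam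
          (R₀ * ((U⁻¹ : (H →L[ℂ] H)ˣ) : H →L[ℂ] H)) :=
        isResolventAt_perturb hR₀ lam hμ
      have hmem : lam ∈ ρ := ⟨_, hres⟩
      have hchoose : hmem.choose = R₀ * ((U⁻¹ : (H →L[ℂ] H)ˣ) : H →L[ℂ] H) :=
        isResolventAt_unique hmem.choose_spec hres
      have hinv_eq : Ring.inverse ((1 : H →L[ℂ] H) - (lam - lam₀) • R₀)
          = ((U⁻¹ : (H →L[ℂ] H)ˣ) : H →L[ℂ] H) := Ring.inverse_unit U
      have hs : (fun lam => if h : lam ∈ ρ then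
          (v : H) - h.choose (T v - lam • (v : H)) else 0) lam
          = (v : H) - hmem.choose (T v - lam • (v : H)) := by
        simp only [dif_pos hmem]
      show (fun lam => if h : lam ∈ ρ then
          (v : H) - h.choose (T v - lam • (v : H)) else 0) lam = _
      rw [hs, hchoose]
      beta_reduce
      rw [hinv_eq]
      rfl
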